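/- Let X be a nonempty finite set of prompts and S a nonempty finite set of responses. For each prompt x ∈ X let C(x) ⊆ S be a nonempty set of correct responses, let len : S → ℝ be a length function, let f : ℝ → ℝ be a function with 0 ≤ f(t) ≤ 1 for all t, and fix α ∈ [0,1). Define the reward r(x,y) = (1 − α·f(len(y))) if y ∈ C(x) and r(x,y) = 0 otherwise, and for a family of probability mass functions p(·|x) on S define the objective J(p) = (1/|X|) · Σ_{x∈X} Σ_{y∈S} p(y|x)·r(x,y) and the accuracy Acc(p) = (1/|X|) · Σ_{x∈X} Σ_{y∈C(x)} p(y|x). Then any family p* of probability mass functions maximizing J over all families of probability mass functions on S satisfies Acc(p*) = 1. -/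
import Mathlib


/-- Any family of probability mass functions maximizing the
length-penalized objective `J` achieves accuracy `1`. -/
theorem penalized_maximizer_has_accuracy_one
    {X S : Type*} [Fintype X] [Fintype S] [DecidableEq S] [Nonempty X] [Nonempty S]
    (C : X → Finset S) (hC : ∀ x, (C x).Nonempty)
    (len : S → ℝ) (f : ℝ → ℝ) (hf : ∀ t, 0 ≤ f t ∧ f t ≤ 1)
    (α : ℝ) (hα : 0 ≤ α ∧ α < 1)
    (r : X → S → ℝ)
    (hr : ∀ x y, r x y = if y ∈ C x then 1 - α * f (len y) else 0)
    (J : (X → S → ℝ) → ℝ)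
    (hJ : ∀ p, J p = (1 / (Fintype.card X : ℝ)) * ∑ x, ∑ y, p x y * r x y)
    (Acc : (X → S → ℝ) → ℝ)
    (hAcc : ∀ p, Acc p = (1 / (Fintype.card X : ℝ)) * ∑ x, ∑ y ∈ C x, p x y)
    (pstar : X → S → ℝ)
    (hpos : ∀ x y, 0 ≤ pstar x y)
    (hsum : ∀ x, ∑ y, pstar x y = 1)
    (hmax : ∀ q : X → S → ℝ,
      (∀ x y, 0 ≤ q x y) → (∀ x, ∑ y, q x y = 1) → J q ≤ J pstar) :
    Acc pstar = 1 := by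
  have hcard : (0:ℝ) < (Fintype.card X : ℝ) := by
    exact_mod_cast Fintype.card_pos
  -- best correct response for each prompt
  choose ystar hyC hybest using fun x => (C x).exists_max_image (r x) (hC x)
  have hrpos : ∀ x y, y ∈ C x → 1 - α ≤ r x y := by
    intro x y hy
    rw [hr, if_pos hy]
    have h1 := (hf (len y)).1
    have h2 := (hf (len y)).2
    nlinarith [hα.1, hα.2]
  have hrle : ∀ x y, r x y ≤ r x (ystar x) := by
    intro x y
    by_cases hy : y ∈ C x
    · exact hybest x y hy
    · rw [hr x y, if_neg hy]
      linarith [hrpos x (ystar x) (hyC x)]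
  have hBpos : ∀ x, 0 < r x (ystar x) := fun x =>
    lt_of_lt_of_le (by linarith [hα.2]) (hrpos x (ystar x) (hyC x))
  set q : X → S → ℝ := fun x y => if y = ystar x then 1 else 0 with hqdef
  have hq0 : ∀ x y, 0 ≤ q x y := by
    intro x y; simp only [hqdef]; split <;> norm_num
  have hq1 : ∀ x, ∑ y, q x y = 1 := by
    intro x; simp [hqdef]
  have hJq : ∀ x, ∑ y, q x y * r x y = r x (ystar x) := by
    intro x
    have : ∀ y, q x y * r x y = if y = ystar x then r x y else 0 := by
      intro y; simp only [hqdef]; split <;> simp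
    simp only [this]
    simp [Finset.sum_ite_eq']
  -- termwise inequality
  have hterm : ∀ x, ∑ y, pstar x y * r x y ≤ r x (ystar x) := by
    intro x
    calc ∑ y, pstar x y * r x y ≤ ∑ y, pstar x y * r x (ystar x) :=
          Finset.sum_le_sum fun y _ => mul_le_mul_of_nonneg_left (hrle x y) (hpos x y)
      _ = r x (ystar x) := by rw [← Finset.sum_mul, hsum, one_mul]
  -- maximality gives equality of sums
  have hsums : ∑ x, r x (ystar x) ≤ ∑ x, ∑ y, pstar x y * r x y := by
    have h1 := hmax q hq0 hq1
    rw [hJ, hJ] at h1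
    have hinv : (0:ℝ) < 1 / (Fintype.card X : ℝ) := by positivity
    have h2 : ∑ x, ∑ y, q x y * r x y ≤ ∑ x, ∑ y, pstar x y * r x y :=
      le_of_mul_le_mul_left h1 hinv
    calc ∑ x, r x (ystar x) = ∑ x, ∑ y, q x y * r x y := by
          exact Finset.sum_congr rfl fun x _ => (hJq x).symm
      _ ≤ _ := h2
  have heq : ∀ x, ∑ y, pstar x y * r x y = r x (ystar x) := by
    have h := (Finset.sum_eq_sum_iff_of_le (fun x _ => hterm x)).mp
      (le_antisymm (Finset.sum_le_sum fun x _ => hterm x) hsums)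
    intro x; exact h x (Finset.mem_univ x)
  -- mass outside C x is zero
  have hzero : ∀ x y, y ∉ C x → pstar x y = 0 := by
    intro x y hy
    have hxeq : ∑ z, pstar x z * r x z = ∑ z, pstar x z * r x (ystar x) := by
      rw [heq, ← Finset.sum_mul, hsum, one_mul]
    have hle : ∀ z ∈ Finset.univ, pstar x z * r x z ≤ pstar x z * r x (ystar x) :=
      fun z _ => mul_le_mul_of_nonneg_left (hrle x z) (hpos x z)
    have h := (Finset.sum_eq_sum_iff_of_le hle).mp hxeq y (Finset.mem_univ y)
    rw [hr x y, if_neg hy, mul_zero] at h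
    have := hBpos x
    by_contra hne
    have hp : 0 < pstar x y := lt_of_le_of_ne (hpos x y) (Ne.symm hne)
    nlinarith
  have hsumC : ∀ x, ∑ y ∈ C x, pstar x y = 1 := by
    intro x
    rw [← hsum x]
    exact Finset.sum_subset (Finset.subset_univ _)
      (fun y _ hy => hzero x y hy)
  rw [hAcc]
  simp only [hsumC]
  rw [Finset.sum_const, Finset.card_univ, nsmul_eq_mul, mul_one]
  field_simp
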